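/- Let t_1, t_2, t_3 be nonnegative integers, not all zero. Consider the order ideal A consisting of all divisors of the monomials x_1 x_2 x_3, ..., x_{3t_1−2} x_{3t_1−1} x_{3t_1}, y_1 y_2^2, ..., y_{2t_2−1} y_{2t_2}^2, z_1^3, ..., z_{t_3}^3, where the x's, y's, and z's are 3t_1 + 2t_2 + t_3 pairwise distinct variables. Then A is a pure order ideal and its h-vector is (1, 3t_1 + 2t_2 + t_3, 3t_1 + 2t_2 + t_3, t_1 + t_2 + t_3). -/

import Mathlib

/-- The degree of a monomial (exponent vector) in `s` variables. -/
def mdeg {s : ℕ} (u : Fin s → ℕ) : ℕ := ∑ i, u i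

/-- A (nonempty, finite) set of monomials is an order ideal if it is closed
under divisibility (componentwise `≤` of exponent vectors). -/
def IsOrderIdeal {s : ℕ} (A : Finset (Fin s → ℕ)) : Prop :=
  A.Nonempty ∧ ∀ u ∈ A, ∀ v : Fin s → ℕ, v ≤ u → v ∈ A

/-- `u` is a maximal element of `A` with respect to divisibility. -/
def IsMaximalIn {s : ℕ} (A : Finset (Fin s → ℕ)) (u : Fin s → ℕ) : Prop :=
  u ∈ A ∧ ∀ v ∈ A, u ≤ v → v = u

/-- An order ideal is pure if all its maximal monomials have the same degree. -/
def IsPure {s : ℕ} (A : Finset (Fin s → ℕ)) : Prop :=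
  ∀ u v : Fin s → ℕ, IsMaximalIn A u → IsMaximalIn A v → mdeg u = mdeg v

/-- The maximal degree of a monomial in `A`. -/
def topDegree {s : ℕ} (A : Finset (Fin s → ℕ)) : ℕ := A.sup mdeg

/-- The number of monomials of degree `i` in `A`. -/
def hVec {s : ℕ} (A : Finset (Fin s → ℕ)) (i : ℕ) : ℕ :=
  (A.filter (fun u => mdeg u = i)).card

/-- The h-vector `(h_0, h_1, ..., h_n)` of `A`, where `n = topDegree A`. -/
def hVector {s : ℕ} (A : Finset (Fin s → ℕ)) : List ℕ :=
  (List.range (topDegree A + 1)).map (hVec A)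

/-- A finite sequence is a pure O-sequence if it is the h-vector of some
pure order ideal of monomials. -/
def IsPureOSequence (h : List ℕ) : Prop :=
  ∃ (s : ℕ) (A : Finset (Fin s → ℕ)), IsOrderIdeal A ∧ IsPure A ∧ hVector A = h

/-- All divisors of a monomial, as a finite set. -/
def divisorSet {s : ℕ} (u : Fin s → ℕ) : Finset (Fin s → ℕ) :=
  Fintype.piFinset (fun i => Finset.range (u i + 1))

/-- The order ideal generated by a finite set of monomials: all their divisors. -/
def generatedIdeal {s : ℕ} (G : Finset (Fin s → ℕ)) : Finset (Fin s → ℕ) :=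
  G.biUnion divisorSet

/-- The generators `x_1 x_2 x_3, ..., x_{3t₁-2} x_{3t₁-1} x_{3t₁},
y_1 y_2², ..., y_{2t₂-1} y_{2t₂}², z_1³, ..., z_{t₃}³` in `3t₁ + 2t₂ + t₃`
distinct variables. -/
def gens10 (t₁ t₂ t₃ : ℕ) : Finset (Fin (3 * t₁ + 2 * t₂ + t₃) → ℕ) :=
  ((Finset.range t₁).image (fun k => (fun i : Fin (3 * t₁ + 2 * t₂ + t₃) =>
      if i.val = 3 * k ∨ i.val = 3 * k + 1 ∨ i.val = 3 * k + 2 then 1 else 0))) ∪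
  ((Finset.range t₂).image (fun k => (fun i : Fin (3 * t₁ + 2 * t₂ + t₃) =>
      if i.val = 3 * t₁ + 2 * k then 1
      else if i.val = 3 * t₁ + 2 * k + 1 then 2 else 0))) ∪
  ((Finset.range t₃).image (fun k => (fun i : Fin (3 * t₁ + 2 * t₂ + t₃) =>
      if i.val = 3 * t₁ + 2 * t₂ + k then 3 else 0)))

/-!
Distinct generators of this ideal involve disjoint sets of variables, so a monomial of positive
degree in the ideal divides exactly one generator. Hence for `d ≥ 1` the number `h_d` is the sum,
over the generators, of the number of their divisors of degree `d`. That number is unchanged by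
renaming variables, so it can be read off the three shapes `x₁x₂x₃`, `y₁y₂²`, `z³`, whose
divisors by degree are `(1, 3, 3, 1)`, `(1, 2, 2, 1)` and `(1, 1, 1, 1)`. All generators have
degree `3`, which gives purity and the length of the h-vector.
-/

section OrderIdeal

variable {s : ℕ}

lemma mem_divisorSet {u v : Fin s → ℕ} : v ∈ divisorSet u ↔ v ≤ u := by
  simp [divisorSet, Fintype.mem_piFinset, Pi.le_def]

lemma mem_generatedIdeal {G : Finset (Fin s → ℕ)} {u : Fin s → ℕ} :
    u ∈ generatedIdeal G ↔ ∃ g ∈ G, u ≤ g := by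
  simp [generatedIdeal, mem_divisorSet]

lemma self_mem_generatedIdeal {G : Finset (Fin s → ℕ)} {g : Fin s → ℕ} (hg : g ∈ G) :
    g ∈ generatedIdeal G :=
  mem_generatedIdeal.2 ⟨g, hg, le_rfl⟩

lemma mdeg_strictMono : StrictMono (mdeg (s := s)) := Fintype.sum_strictMono

lemma mdeg_eq_zero_iff {u : Fin s → ℕ} : mdeg u = 0 ↔ u = 0 := by
  simp [mdeg, funext_iff]

lemma disjoint_iff_forall_eq_zero {u v : Fin s → ℕ} : Disjoint u v ↔ ∀ i, u i = 0 ∨ v i = 0 := by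
  rw [Pi.disjoint_iff]
  refine forall_congr' fun i => ?_
  rw [disjoint_iff]
  show min (u i) (v i) = 0 ↔ _
  omega

variable {G : Finset (Fin s → ℕ)}

lemma isOrderIdeal_generatedIdeal (hG : G.Nonempty) : IsOrderIdeal (generatedIdeal G) := by
  obtain ⟨g, hg⟩ := hG
  refine ⟨⟨g, self_mem_generatedIdeal hg⟩, fun u hu v hvu => ?_⟩
  obtain ⟨g', hg', hug'⟩ := mem_generatedIdeal.1 hu
  exact mem_generatedIdeal.2 ⟨g', hg', hvu.trans hug'⟩

lemma isPure_generatedIdeal {n : ℕ} (hdeg : ∀ g ∈ G, mdeg g = n) :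
    IsPure (generatedIdeal G) := by
  suffices h : ∀ w, IsMaximalIn (generatedIdeal G) w → mdeg w = n from
    fun u v hu hv => (h u hu).trans (h v hv).symm
  intro w hw
  obtain ⟨g, hg, hwg⟩ := mem_generatedIdeal.1 hw.1
  rw [← hw.2 g (self_mem_generatedIdeal hg) hwg]
  exact hdeg g hg

lemma topDegree_generatedIdeal {n : ℕ} (hG : G.Nonempty) (hdeg : ∀ g ∈ G, mdeg g = n) :
    topDegree (generatedIdeal G) = n := by
  refine le_antisymm (Finset.sup_le fun u hu => ?_) ?_
  · obtain ⟨g, hg, hug⟩ := mem_generatedIdeal.1 hu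
    exact (mdeg_strictMono.monotone hug).trans_eq (hdeg g hg)
  · obtain ⟨g, hg⟩ := hG
    exact hdeg g hg ▸ Finset.le_sup (f := mdeg) (self_mem_generatedIdeal hg)

lemma hVec_generatedIdeal_zero (hG : G.Nonempty) : hVec (generatedIdeal G) 0 = 1 := by
  obtain ⟨g, hg⟩ := hG
  have h0 : (0 : Fin s → ℕ) ∈ generatedIdeal G :=
    mem_generatedIdeal.2 ⟨g, hg, fun i => Nat.zero_le (g i)⟩
  rw [hVec, Finset.card_eq_one]
  exact ⟨0, by ext u; simp +contextual [mdeg_eq_zero_iff, h0]⟩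

lemma hVec_generatedIdeal_image {ι : Type*} {I : Finset ι} {f : ι → Fin s → ℕ}
    (hf : (I : Set ι).PairwiseDisjoint f) {d : ℕ} (hd : d ≠ 0) :
    hVec (generatedIdeal (I.image f)) d = ∑ i ∈ I, hVec (divisorSet (f i)) d := by
  rw [hVec, generatedIdeal, Finset.image_biUnion, Finset.filter_biUnion, Finset.card_biUnion]
  · rfl
  intro i hi j hj hij
  refine Finset.disjoint_left.2 fun v hvi hvj => ?_
  simp only [Finset.mem_filter, mem_divisorSet] at hvi hvj
  have hv : v = 0 := le_bot_iff.1 (hf hi hj hij hvi.1 hvj.1)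
  exact hd (hvi.2 ▸ mdeg_eq_zero_iff.2 hv)

end OrderIdeal

def IsRelabeling {m s : ℕ} (w : Fin m → ℕ) (g : Fin s → ℕ) : Prop :=
  ∃ e : Fin m ↪ Fin s, g ∘ e = w ∧ ∀ i ∉ Set.range e, g i = 0

namespace IsRelabeling

variable {m s : ℕ} {w : Fin m → ℕ} {g : Fin s → ℕ}

lemma mdeg_eq (h : IsRelabeling w g) : mdeg g = mdeg w := by
  obtain ⟨e, rfl, hg⟩ := h
  exact (Fintype.sum_of_injective e e.injective _ g hg fun _ => rfl).symm

lemma hVec_divisorSet_eq (h : IsRelabeling w g) (d : ℕ) :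
    hVec (divisorSet g) d = hVec (divisorSet w) d := by
  obtain ⟨e, rfl, hg⟩ := h
  have hvanish : ∀ v ≤ g, ∀ i ∉ Set.range e, v i = 0 := fun v hv i hi =>
    Nat.eq_zero_of_le_zero (hg i hi ▸ hv i)
  refine Finset.card_bij (fun v _ => v ∘ e) (fun v hv => ?_) (fun v hv v' hv' hvv' => ?_)
    (fun u hu => ?_)
  · simp only [Finset.mem_filter, mem_divisorSet] at hv ⊢
    exact ⟨fun j => hv.1 (e j), (mdeg_eq ⟨e, rfl, hvanish v hv.1⟩).symm.trans hv.2⟩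
  · simp only [Finset.mem_filter, mem_divisorSet] at hv hv'
    funext i
    by_cases hi : i ∈ Set.range e
    · obtain ⟨j, rfl⟩ := hi
      exact congrFun hvv' j
    · rw [hvanish v hv.1 i hi, hvanish v' hv'.1 i hi]
  · simp only [Finset.mem_filter, mem_divisorSet] at hu ⊢
    have hext : ∀ i ∉ Set.range e, Function.extend e u 0 i = 0 := fun i hi =>
      Function.extend_apply' _ _ _ hi
    refine ⟨Function.extend e u 0, ⟨fun i => ?_, ?_⟩, Function.extend_comp e.injective _ _⟩
    · by_cases hi : i ∈ Set.range e
      · obtain ⟨j, rfl⟩ := hi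
        rw [e.injective.extend_apply]
        exact hu.1 j
      · rw [hext i hi]
        exact Nat.zero_le _
    · rw [mdeg_eq ⟨e, Function.extend_comp e.injective _ _, hext⟩, hu.2]

end IsRelabeling

lemma isRelabeling_of_block {s a m : ℕ} {g : Fin s → ℕ} {w : Fin m → ℕ} (h : a + m ≤ s)
    (hg : ∀ i : Fin s, g i ≠ 0 → a ≤ i ∧ (i : ℕ) < a + m)
    (hw : ∀ j : Fin m, g ⟨a + j, by omega⟩ = w j) : IsRelabeling w g := by
  refine ⟨(Fin.natAddEmb a).trans (Fin.castLEEmb h), funext hw, fun i hi => ?_⟩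
  by_contra hne
  obtain ⟨h₁, h₂⟩ := hg i hne
  exact hi ⟨⟨i - a, by omega⟩, Fin.ext (by simp; omega)⟩

lemma hVec_divisorSet_one_one_one :
    ∀ d ∈ Finset.Icc 1 3, hVec (divisorSet ![1, 1, 1]) d = if d = 3 then 1 else 3 := by
  decide

lemma hVec_divisorSet_one_two :
    ∀ d ∈ Finset.Icc 1 3, hVec (divisorSet ![1, 2]) d = if d = 3 then 1 else 2 := by
  decide

lemma hVec_divisorSet_three : ∀ d ∈ Finset.Icc 1 3, hVec (divisorSet ![3]) d = 1 := by
  decide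

section Gens10

variable {t₁ t₂ t₃ : ℕ}

def gen10 (t₁ t₂ t₃ : ℕ) : ℕ ⊕ ℕ ⊕ ℕ → Fin (3 * t₁ + 2 * t₂ + t₃) → ℕ
  | .inl k => fun i => if i.val = 3 * k ∨ i.val = 3 * k + 1 ∨ i.val = 3 * k + 2 then 1 else 0
  | .inr (.inl k) => fun i =>
      if i.val = 3 * t₁ + 2 * k then 1 else if i.val = 3 * t₁ + 2 * k + 1 then 2 else 0
  | .inr (.inr k) => fun i => if i.val = 3 * t₁ + 2 * t₂ + k then 3 else 0

def genIndex10 (t₁ t₂ t₃ : ℕ) : Finset (ℕ ⊕ ℕ ⊕ ℕ) :=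
  (Finset.range t₁).disjSum ((Finset.range t₂).disjSum (Finset.range t₃))

lemma gens10_eq_image : gens10 t₁ t₂ t₃ = (genIndex10 t₁ t₂ t₃).image (gen10 t₁ t₂ t₃) := by
  ext g
  simp [gens10, gen10, genIndex10, Finset.mem_disjSum]

lemma pairwiseDisjoint_gen10 :
    (genIndex10 t₁ t₂ t₃ : Set (ℕ ⊕ ℕ ⊕ ℕ)).PairwiseDisjoint (gen10 t₁ t₂ t₃) := by
  rintro (k | k | k) hk (k' | k' | k') hk' hne <;>
    simp only [genIndex10, Finset.mem_coe, Finset.inl_mem_disjSum, Finset.inr_mem_disjSum,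
      Finset.mem_range, ne_eq, Sum.inl.injEq, Sum.inr.injEq, reduceCtorEq] at hk hk' hne <;>
    refine disjoint_iff_forall_eq_zero.2 fun i => ?_ <;>
    simp only [gen10] <;> split_ifs <;> omega

lemma isRelabeling_gen10_inl {k : ℕ} (hk : k < t₁) :
    IsRelabeling ![1, 1, 1] (gen10 t₁ t₂ t₃ (.inl k)) :=
  isRelabeling_of_block (a := 3 * k) (by omega)
    (fun i hi => by simp only [gen10] at hi; split_ifs at hi <;> omega)
    (fun j => by fin_cases j <;> simp [gen10])

lemma isRelabeling_gen10_inr_inl {k : ℕ} (hk : k < t₂) :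
    IsRelabeling ![1, 2] (gen10 t₁ t₂ t₃ (.inr (.inl k))) :=
  isRelabeling_of_block (a := 3 * t₁ + 2 * k) (by omega)
    (fun i hi => by simp only [gen10] at hi; split_ifs at hi <;> omega)
    (fun j => by fin_cases j <;> simp [gen10])

lemma isRelabeling_gen10_inr_inr {k : ℕ} (hk : k < t₃) :
    IsRelabeling ![3] (gen10 t₁ t₂ t₃ (.inr (.inr k))) :=
  isRelabeling_of_block (a := 3 * t₁ + 2 * t₂ + k) (by omega)
    (fun i hi => by simp only [gen10] at hi; split_ifs at hi <;> omega)
    (fun j => by fin_cases j; simp [gen10])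

lemma gens10_nonempty (ht : ¬(t₁ = 0 ∧ t₂ = 0 ∧ t₃ = 0)) : (gens10 t₁ t₂ t₃).Nonempty := by
  rw [gens10_eq_image, Finset.image_nonempty, ← Finset.card_pos]
  simp only [genIndex10, Finset.card_disjSum, Finset.card_range]
  omega

lemma mdeg_of_mem_gens10 : ∀ g ∈ gens10 t₁ t₂ t₃, mdeg g = 3 := by
  simp only [gens10_eq_image, Finset.forall_mem_image]
  rintro (k | k | k) hk <;>
    simp only [genIndex10, Finset.inl_mem_disjSum, Finset.inr_mem_disjSum, Finset.mem_range] at hk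
  · exact (isRelabeling_gen10_inl hk).mdeg_eq
  · exact (isRelabeling_gen10_inr_inl hk).mdeg_eq
  · exact (isRelabeling_gen10_inr_inr hk).mdeg_eq

lemma hVec_generatedIdeal_gens10 {d : ℕ} (hd : d ∈ Finset.Icc 1 3) :
    hVec (generatedIdeal (gens10 t₁ t₂ t₃)) d =
      if d = 3 then t₁ + t₂ + t₃ else 3 * t₁ + 2 * t₂ + t₃ := by
  have hx : ∀ k ∈ Finset.range t₁, hVec (divisorSet (gen10 t₁ t₂ t₃ (.inl k))) d =
      if d = 3 then 1 else 3 := fun k hk => by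
    rw [(isRelabeling_gen10_inl (Finset.mem_range.1 hk)).hVec_divisorSet_eq,
      hVec_divisorSet_one_one_one d hd]
  have hy : ∀ k ∈ Finset.range t₂, hVec (divisorSet (gen10 t₁ t₂ t₃ (.inr (.inl k)))) d =
      if d = 3 then 1 else 2 := fun k hk => by
    rw [(isRelabeling_gen10_inr_inl (Finset.mem_range.1 hk)).hVec_divisorSet_eq,
      hVec_divisorSet_one_two d hd]
  have hz : ∀ k ∈ Finset.range t₃, hVec (divisorSet (gen10 t₁ t₂ t₃ (.inr (.inr k)))) d = 1 :=
    fun k hk => by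
      rw [(isRelabeling_gen10_inr_inr (Finset.mem_range.1 hk)).hVec_divisorSet_eq,
        hVec_divisorSet_three d hd]
  rw [gens10_eq_image, hVec_generatedIdeal_image pairwiseDisjoint_gen10
      (by rw [Finset.mem_Icc] at hd; omega),
    genIndex10, Finset.sum_disjSum, Finset.sum_disjSum, Finset.sum_congr rfl hx,
    Finset.sum_congr rfl hy, Finset.sum_congr rfl hz]
  simp only [Finset.sum_const, Finset.card_range, smul_eq_mul]
  split_ifs <;> ring

end Gens10

/-- The order ideal generated by those monomials is a pure order ideal with
h-vector `(1, 3t₁+2t₂+t₃, 3t₁+2t₂+t₃, t₁+t₂+t₃)`. -/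
theorem stmt_10 (t₁ t₂ t₃ : ℕ) (ht : ¬(t₁ = 0 ∧ t₂ = 0 ∧ t₃ = 0)) :
    IsOrderIdeal (generatedIdeal (gens10 t₁ t₂ t₃)) ∧
    IsPure (generatedIdeal (gens10 t₁ t₂ t₃)) ∧
    hVector (generatedIdeal (gens10 t₁ t₂ t₃)) =
      [1, 3 * t₁ + 2 * t₂ + t₃, 3 * t₁ + 2 * t₂ + t₃, t₁ + t₂ + t₃] := by
  have hG := gens10_nonempty ht
  refine ⟨isOrderIdeal_generatedIdeal hG, isPure_generatedIdeal mdeg_of_mem_gens10, ?_⟩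
  rw [hVector, topDegree_generatedIdeal hG mdeg_of_mem_gens10]
  simp only [List.range_succ, List.range_zero, List.nil_append, List.cons_append,
    List.map_cons, List.map_nil]
  rw [hVec_generatedIdeal_zero hG, hVec_generatedIdeal_gens10 (by decide),
    hVec_generatedIdeal_gens10 (by decide), hVec_generatedIdeal_gens10 (by decide)]
  simp
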